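/- Let U ⊆ ℝ² be an open set and f : U → ℝ a smooth function with f_x > 0 and f_y > 0 on U. Set H = f_{xy}/(f_x·f_y), ∂₁ = −(1/f_x)·∂/∂x, ∂₂ = −(1/f_y)·∂/∂y. Then the scalar curvature K = ∂₁(H) − ∂₂(H) satisfies K = −(1/(f_x·f_y))·∂²/∂x∂y ( log(f_x/f_y) ). -/

import Mathlib

/-- Partial derivative with respect to the first coordinate. -/
noncomputable def pdx (f : ℝ × ℝ → ℝ) : ℝ × ℝ → ℝ :=
  fun q => deriv (fun t => f (t, q.2)) q.1

/-- Partial derivative with respect to the second coordinate. -/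
noncomputable def pdy (f : ℝ × ℝ → ℝ) : ℝ × ℝ → ℝ :=
  fun q => deriv (fun t => f (q.1, t)) q.2

/-- The vector field `∂₁ = -(1/f_x)·∂/∂x` applied to a function `p`. -/
noncomputable def D1 (f p : ℝ × ℝ → ℝ) : ℝ × ℝ → ℝ :=
  fun q => -(pdx p q) / pdx f q

/-- The vector field `∂₂ = -(1/f_y)·∂/∂y` applied to a function `p`. -/
noncomputable def D2 (f p : ℝ × ℝ → ℝ) : ℝ × ℝ → ℝ :=
  fun q => -(pdy p q) / pdy f q

/-- `H = f_{xy}/(f_x·f_y)`. -/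
noncomputable def Hf (f : ℝ × ℝ → ℝ) : ℝ × ℝ → ℝ :=
  fun q => pdy (pdx f) q / (pdx f q * pdy f q)

/-- A differential 1-form `a dx + c dy` on (an open subset of) `ℝ²`, recorded by its
pair of coefficient functions `(a, c)`. -/
abbrev Form1 : Type := (ℝ × ℝ → ℝ) × (ℝ × ℝ → ℝ)

/-- The coefficient of `dx ∧ dy` in the wedge product of two 1-forms. -/
noncomputable def wedge (α β : Form1) : ℝ × ℝ → ℝ :=
  fun q => α.1 q * β.2 q - α.2 q * β.1 q

/-- The coefficient of `dx ∧ dy` in the exterior derivative of a 1-form. -/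
noncomputable def extd (α : Form1) : ℝ × ℝ → ℝ :=
  fun q => pdx α.2 q - pdy α.1 q

/-- Multiplication of a 1-form by a function. -/
noncomputable def smul1 (s : ℝ × ℝ → ℝ) (α : Form1) : Form1 :=
  (fun q => s q * α.1 q, fun q => s q * α.2 q)

/-- The coordinate 1-form `dx`. -/
noncomputable def dX : Form1 := (fun _ => 1, fun _ => 0)

/-- The coordinate 1-form `dy`. -/
noncomputable def dY : Form1 := (fun _ => 0, fun _ => 1)

lemma hasDerivAt_sliceX {g : ℝ × ℝ → ℝ} {q : ℝ × ℝ} (hg : DifferentiableAt ℝ g q) :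
    HasDerivAt (fun t => g (t, q.2)) (fderiv ℝ g q (1, 0)) q.1 := by
  have h1 : HasDerivAt (fun t : ℝ => (t, q.2)) ((1 : ℝ), (0 : ℝ)) q.1 :=
    HasDerivAt.prodMk (hasDerivAt_id q.1) (hasDerivAt_const q.1 q.2)
  have := hg.hasFDerivAt.comp_hasDerivAt_of_eq q.1 h1 (by simp)
  exact this

lemma hasDerivAt_sliceY {g : ℝ × ℝ → ℝ} {q : ℝ × ℝ} (hg : DifferentiableAt ℝ g q) :
    HasDerivAt (fun t => g (q.1, t)) (fderiv ℝ g q (0, 1)) q.2 := by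
  have h1 : HasDerivAt (fun t : ℝ => (q.1, t)) ((0 : ℝ), (1 : ℝ)) q.2 :=
    HasDerivAt.prodMk (hasDerivAt_const q.2 q.1) (hasDerivAt_id q.2)
  exact hg.hasFDerivAt.comp_hasDerivAt_of_eq q.2 h1 (by simp)

lemma pdx_eq_fderiv {g : ℝ × ℝ → ℝ} {q : ℝ × ℝ} (hg : DifferentiableAt ℝ g q) :
    pdx g q = fderiv ℝ g q (1, 0) := (hasDerivAt_sliceX hg).deriv

lemma pdy_eq_fderiv {g : ℝ × ℝ → ℝ} {q : ℝ × ℝ} (hg : DifferentiableAt ℝ g q) :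
    pdy g q = fderiv ℝ g q (0, 1) := (hasDerivAt_sliceY hg).deriv

lemma hasDerivAt_pdx {g : ℝ × ℝ → ℝ} {q : ℝ × ℝ} (hg : DifferentiableAt ℝ g q) :
    HasDerivAt (fun t => g (t, q.2)) (pdx g q) q.1 := by
  rw [pdx_eq_fderiv hg]; exact hasDerivAt_sliceX hg

lemma hasDerivAt_pdy {g : ℝ × ℝ → ℝ} {q : ℝ × ℝ} (hg : DifferentiableAt ℝ g q) :
    HasDerivAt (fun t => g (q.1, t)) (pdy g q) q.2 := by
  rw [pdy_eq_fderiv hg]; exact hasDerivAt_sliceY hg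

lemma pdx_mul {g h : ℝ × ℝ → ℝ} {q : ℝ × ℝ} (hg : DifferentiableAt ℝ g q)
    (hh : DifferentiableAt ℝ h q) :
    pdx (fun r => g r * h r) q = pdx g q * h q + g q * pdx h q :=
  ((hasDerivAt_pdx hg).mul (hasDerivAt_pdx hh)).deriv

lemma pdx_div {g h : ℝ × ℝ → ℝ} {q : ℝ × ℝ} (hg : DifferentiableAt ℝ g q)
    (hh : DifferentiableAt ℝ h q) (h0 : h q ≠ 0) :
    pdx (fun r => g r / h r) q = (pdx g q * h q - g q * pdx h q) / (h q) ^ 2 :=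
  ((hasDerivAt_pdx hg).div (hasDerivAt_pdx hh) h0).deriv

lemma pdx_sub {g h : ℝ × ℝ → ℝ} {q : ℝ × ℝ} (hg : DifferentiableAt ℝ g q)
    (hh : DifferentiableAt ℝ h q) :
    pdx (fun r => g r - h r) q = pdx g q - pdx h q :=
  ((hasDerivAt_pdx hg).sub (hasDerivAt_pdx hh)).deriv

lemma pdx_log {g : ℝ × ℝ → ℝ} {q : ℝ × ℝ} (hg : DifferentiableAt ℝ g q) (h0 : g q ≠ 0) :
    pdx (fun r => Real.log (g r)) q = pdx g q / g q :=
  ((hasDerivAt_pdx hg).log h0).deriv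

lemma pdy_mul {g h : ℝ × ℝ → ℝ} {q : ℝ × ℝ} (hg : DifferentiableAt ℝ g q)
    (hh : DifferentiableAt ℝ h q) :
    pdy (fun r => g r * h r) q = pdy g q * h q + g q * pdy h q :=
  ((hasDerivAt_pdy hg).mul (hasDerivAt_pdy hh)).deriv

lemma pdy_div {g h : ℝ × ℝ → ℝ} {q : ℝ × ℝ} (hg : DifferentiableAt ℝ g q)
    (hh : DifferentiableAt ℝ h q) (h0 : h q ≠ 0) :
    pdy (fun r => g r / h r) q = (pdy g q * h q - g q * pdy h q) / (h q) ^ 2 :=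
  ((hasDerivAt_pdy hg).div (hasDerivAt_pdy hh) h0).deriv

lemma pdy_sub {g h : ℝ × ℝ → ℝ} {q : ℝ × ℝ} (hg : DifferentiableAt ℝ g q)
    (hh : DifferentiableAt ℝ h q) :
    pdy (fun r => g r - h r) q = pdy g q - pdy h q :=
  ((hasDerivAt_pdy hg).sub (hasDerivAt_pdy hh)).deriv

lemma pdx_congr {g h : ℝ × ℝ → ℝ} {q : ℝ × ℝ} (he : g =ᶠ[nhds q] h) :
    pdx g q = pdx h q := by
  apply Filter.EventuallyEq.deriv_eq
  have hc : Filter.Tendsto (fun t : ℝ => (t, q.2)) (nhds q.1) (nhds q) := by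
    have := (continuous_id.prodMk (continuous_const : Continuous fun _ : ℝ => q.2)).tendsto q.1
    simpa using this
  exact hc.eventually he

lemma pdy_congr {g h : ℝ × ℝ → ℝ} {q : ℝ × ℝ} (he : g =ᶠ[nhds q] h) :
    pdy g q = pdy h q := by
  apply Filter.EventuallyEq.deriv_eq
  have hc : Filter.Tendsto (fun t : ℝ => (q.1, t)) (nhds q.2) (nhds q) := by
    have := ((continuous_const : Continuous fun _ : ℝ => q.1).prodMk continuous_id).tendsto q.2
    simpa using this
  exact hc.eventually he

lemma contDiffOn_pdx {U : Set (ℝ × ℝ)} (hU : IsOpen U) {g : ℝ × ℝ → ℝ}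
    (hg : ContDiffOn ℝ (⊤ : ℕ∞) g U) : ContDiffOn ℝ (⊤ : ℕ∞) (pdx g) U := by
  have h1 : ContDiffOn ℝ (⊤ : ℕ∞) (fun r => fderiv ℝ g r (1, 0)) U :=
    (hg.fderiv_of_isOpen hU le_rfl).clm_apply contDiffOn_const
  exact h1.congr fun r hr =>
    pdx_eq_fderiv (hg.differentiableOn (by norm_num) r hr |>.differentiableAt (hU.mem_nhds hr))

lemma contDiffOn_pdy {U : Set (ℝ × ℝ)} (hU : IsOpen U) {g : ℝ × ℝ → ℝ}
    (hg : ContDiffOn ℝ (⊤ : ℕ∞) g U) : ContDiffOn ℝ (⊤ : ℕ∞) (pdy g) U := by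
  have h1 : ContDiffOn ℝ (⊤ : ℕ∞) (fun r => fderiv ℝ g r (0, 1)) U :=
    (hg.fderiv_of_isOpen hU le_rfl).clm_apply contDiffOn_const
  exact h1.congr fun r hr =>
    pdy_eq_fderiv (hg.differentiableOn (by norm_num) r hr |>.differentiableAt (hU.mem_nhds hr))

lemma clairaut {U : Set (ℝ × ℝ)} (hU : IsOpen U) {g : ℝ × ℝ → ℝ}
    (hg : ContDiffOn ℝ (⊤ : ℕ∞) g U) {q : ℝ × ℝ} (hq : q ∈ U) :
    pdy (pdx g) q = pdx (pdy g) q := by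
  have hgq : ContDiffAt ℝ (⊤ : ℕ∞) g q := hg.contDiffAt (hU.mem_nhds hq)
  have hsym := hgq.isSymmSndFDerivAt (by rw [minSmoothness_of_isRCLikeNormedField]; exact WithTop.coe_le_coe.mpr (le_top : (2 : ℕ∞) ≤ ⊤))
  have hA : DifferentiableAt ℝ (fderiv ℝ g) q := by
    have h1 : ContDiffAt ℝ (1 : ℕ∞) (fderiv ℝ g) q :=
      hgq.fderiv_right (by norm_cast)
    exact h1.differentiableAt (by norm_num)
  -- pdx g agrees with fun r => fderiv g r (1,0) near q
  have hUnh : U ∈ nhds q := hU.mem_nhds hq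
  have hdiff : ∀ r ∈ U, DifferentiableAt ℝ g r := fun r hr =>
    (hg.differentiableOn (by norm_num) r hr).differentiableAt (hU.mem_nhds hr)
  have e1 : pdx g =ᶠ[nhds q] (fun r => fderiv ℝ g r (1, 0)) :=
    Filter.eventually_of_mem hUnh fun r hr => pdx_eq_fderiv (hdiff r hr)
  have e2 : pdy g =ᶠ[nhds q] (fun r => fderiv ℝ g r (0, 1)) :=
    Filter.eventually_of_mem hUnh fun r hr => pdy_eq_fderiv (hdiff r hr)
  have d1 : DifferentiableAt ℝ (fun r => fderiv ℝ g r (1, 0)) q := hA.clm_apply (differentiableAt_const _)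
  have d2 : DifferentiableAt ℝ (fun r => fderiv ℝ g r (0, 1)) q := hA.clm_apply (differentiableAt_const _)
  have k1 : ∀ v w : ℝ × ℝ, fderiv ℝ (fun r => fderiv ℝ g r v) q w = fderiv ℝ (fderiv ℝ g) q w v := by
    intro v w
    have := (hA.hasFDerivAt.clm_apply (hasFDerivAt_const v q)).fderiv
    rw [this]; simp
  rw [pdy_congr e1, pdx_congr e2, pdy_eq_fderiv d1, pdx_eq_fderiv d2, k1, k1]
  exact hsym _ _

/-- Blaschke's formula for the scalar curvature:
`K = ∂₁(H) - ∂₂(H) = -(1/(f_x·f_y))·(log(f_x/f_y))_{xy}` on `U`. -/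
theorem scalar_curvature_blaschke_formula
    (U : Set (ℝ × ℝ)) (hU : IsOpen U)
    (f : ℝ × ℝ → ℝ) (hf : ContDiffOn ℝ (⊤ : ℕ∞) f U)
    (hfx : ∀ q ∈ U, 0 < pdx f q) (hfy : ∀ q ∈ U, 0 < pdy f q) :
    ∀ q ∈ U, D1 f (Hf f) q - D2 f (Hf f) q =
      -(1 / (pdx f q * pdy f q)) *
        pdy (pdx (fun r => Real.log (pdx f r / pdy f r))) q := by
  intro q hq
  have dAt : ∀ g : ℝ × ℝ → ℝ, ContDiffOn ℝ (⊤ : ℕ∞) g U →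
      ∀ r ∈ U, DifferentiableAt ℝ g r := fun g hg r hr =>
    (hg.differentiableOn (by norm_num) r hr).differentiableAt (hU.mem_nhds hr)
  have ha : ContDiffOn ℝ (⊤ : ℕ∞) (pdx f) U := contDiffOn_pdx hU hf
  have hb : ContDiffOn ℝ (⊤ : ℕ∞) (pdy f) U := contDiffOn_pdy hU hf
  have hc : ContDiffOn ℝ (⊤ : ℕ∞) (pdy (pdx f)) U := contDiffOn_pdy hU ha
  have hax : ContDiffOn ℝ (⊤ : ℕ∞) (pdx (pdx f)) U := contDiffOn_pdx hU ha
  have da := dAt _ ha q hq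
  have db := dAt _ hb q hq
  have dc := dAt _ hc q hq
  have dax := dAt _ hax q hq
  have hA0 : pdx f q ≠ 0 := (hfx q hq).ne'
  have hB0 : pdy f q ≠ 0 := (hfy q hq).ne'
  -- Clairaut on f at each point of U
  have clf : ∀ r ∈ U, pdx (pdy f) r = pdy (pdx f) r := fun r hr =>
    (clairaut hU hf hr).symm
  -- Clairaut on pdx f at q
  have cla : pdy (pdx (pdx f)) q = pdx (pdy (pdx f)) q := clairaut hU ha hq
  -- LHS expansion
  have hab0 : pdx f q * pdy f q ≠ 0 := mul_ne_zero hA0 hB0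
  have LHSx : pdx (Hf f) q =
      (pdx (pdy (pdx f)) q * (pdx f q * pdy f q) -
        pdy (pdx f) q * (pdx (pdx f) q * pdy f q + pdx f q * pdy (pdx f) q)) /
        (pdx f q * pdy f q) ^ 2 := by
    have h1 := pdx_div (q := q) (h := fun r => pdx f r * pdy f r) dc (da.mul db) hab0
    rw [show Hf f = fun r => pdy (pdx f) r / (pdx f r * pdy f r) from rfl, h1,
      pdx_mul da db, clf q hq]
  have LHSy : pdy (Hf f) q =
      (pdy (pdy (pdx f)) q * (pdx f q * pdy f q) -
        pdy (pdx f) q * (pdy (pdx f) q * pdy f q + pdx f q * pdy (pdy f) q)) /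
        (pdx f q * pdy f q) ^ 2 := by
    have h1 := pdy_div (q := q) (h := fun r => pdx f r * pdy f r) dc (da.mul db) hab0
    rw [show Hf f = fun r => pdy (pdx f) r / (pdx f r * pdy f r) from rfl, h1,
      pdy_mul da db]
  -- RHS: pdx of log(a/b) agrees on U with G
  have hG : ∀ r ∈ U, pdx (fun s => Real.log (pdx f s / pdy f s)) r =
      pdx (pdx f) r / pdx f r - pdy (pdx f) r / pdy f r := by
    intro r hr
    have e1 : (fun s => Real.log (pdx f s / pdy f s)) =ᶠ[nhds r]
        (fun s => Real.log (pdx f s) - Real.log (pdy f s)) :=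
      Filter.eventually_of_mem (hU.mem_nhds hr) fun s hs =>
        Real.log_div (hfx s hs).ne' (hfy s hs).ne'
    have dar := dAt _ ha r hr
    have dbr := dAt _ hb r hr
    have hA0r : pdx f r ≠ 0 := (hfx r hr).ne'
    have hB0r : pdy f r ≠ 0 := (hfy r hr).ne'
    rw [pdx_congr e1, pdx_sub (dar.log hA0r) (dbr.log hB0r), pdx_log dar hA0r,
      pdx_log dbr hB0r, clf r hr]
  have RHS1 : pdy (pdx (fun s => Real.log (pdx f s / pdy f s))) q =
      (pdy (pdx (pdx f)) q * pdx f q - pdx (pdx f) q * pdy (pdx f) q) / (pdx f q) ^ 2 -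
      (pdy (pdy (pdx f)) q * pdy f q - pdy (pdx f) q * pdy (pdy f) q) / (pdy f q) ^ 2 := by
    have e2 : pdx (fun s => Real.log (pdx f s / pdy f s)) =ᶠ[nhds q]
        (fun r => pdx (pdx f) r / pdx f r - pdy (pdx f) r / pdy f r) :=
      Filter.eventually_of_mem (hU.mem_nhds hq) hG
    have d1 : DifferentiableAt ℝ (fun r => pdx (pdx f) r / pdx f r) q := by
      simp only [div_eq_mul_inv]; exact dax.mul (da.inv hA0)
    have d2 : DifferentiableAt ℝ (fun r => pdy (pdx f) r / pdy f r) q := by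
      simp only [div_eq_mul_inv]; exact dc.mul (db.inv hB0)
    rw [pdy_congr e2, pdy_sub d1 d2,
      pdy_div dax da hA0, pdy_div dc db hB0]
  simp only [D1, D2]
  rw [LHSx, LHSy, RHS1, cla]
  field_simp
  ring
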